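/- Fix η₀ ∈ ℝ and R > 0, and let p be a positive integer and A₀ ≠ 0. Suppose that substituting f(η) = A₀·(η−η₀)^{−p} into the self-similar momentum ODE, the dominant (most singular) terms as η → η₀ balance, i.e. the exponent of the most negative power from the linear term (1+η²)²f'''' equals that from the nonlinear term R(1+η²)(ff'')'. Then necessarily p = 1 and A₀ = 3(1+η₀²)/R. -/
import Mathlib

/-- Leading-order (dominant balance) analysis of the self-similar momentum ODE:
balancing the exponents and coefficients of the most singular terms coming from
`(1+η²)²f''''` (power `ξ^{−p−4}`, coefficient `(1+η₀²)²p(p+1)(p+2)(p+3)A₀`) and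
`R(1+η²)(ff'')'` (power `ξ^{−2p−3}`, coefficient `2R(1+η₀²)p(p+1)²A₀²`)
forces `p = 1` and `A₀ = 3(1+η₀²)/R`. -/
theorem momentum_ode_leading_balance
    (η₀ R A₀ : ℝ) (hR : 0 < R) (p : ℕ) (hp : 0 < p) (hA : A₀ ≠ 0)
    (hexp : -(p : ℤ) - 4 = -2 * (p : ℤ) - 3)
    (hcoeff : (1 + η₀ ^ 2) ^ 2 * ((p : ℝ) * (p + 1) * (p + 2) * (p + 3)) * A₀
        = 2 * R * (1 + η₀ ^ 2) * ((p : ℝ) * (p + 1) ^ 2) * A₀ ^ 2) :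
    p = 1 ∧ A₀ = 3 * (1 + η₀ ^ 2) / R := by
  have hp1 : p = 1 := by omega
  subst hp1
  refine ⟨rfl, ?_⟩
  have h1 : (0:ℝ) < 1 + η₀ ^ 2 := by positivity
  have hR' : R ≠ 0 := ne_of_gt hR
  have h2 : ((1 + η₀ ^ 2) * A₀) * (3 * (1 + η₀ ^ 2) - R * A₀) = 0 := by
    push_cast at hcoeff
    linear_combination (1/8) * hcoeff
  have h3 : 3 * (1 + η₀ ^ 2) - R * A₀ = 0 := by
    rcases mul_eq_zero.mp h2 with h | h
    · exact absurd h (mul_ne_zero (ne_of_gt h1) hA)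
    · exact h
  field_simp
  linarith
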